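/- Let h ≥ 2 and write d_h(j) for the graph distance in MC(2^h) from the vertex 0 to the vertex j mod 2^h (0 ≤ j ≤ 2^{h−1}), and d_{h−1}(j) for the corresponding distance in MC(2^{h−1}). If h = 2n is even, then d_h(j) = d_{h−1}(j) for all 0 ≤ j ≤ (4^n − 1)/3, and d_h(j) = d_{h−1}(j) + 1 for all (4^n − 1)/3 < j ≤ 2^{h−1}. If h = 2n+1 is odd, then d_h(j) = d_{h−1}(j) for all 0 ≤ j ≤ 2(4^n − 1)/3, and d_h(j) = d_{h−1}(j) + 1 for all 2(4^n − 1)/3 < j ≤ 2^{h−1}. (Here j is a natural number, interpreted as an element of ℤ/2^hℤ, respectively ℤ/2^{h−1}ℤ.) -/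

import Mathlib

/-- The circulant graph `Cay(Z_n, S)`: vertices are `ZMod n`, and distinct
vertices `x, y` are adjacent iff `x - y ≡ s` or `y - x ≡ s (mod n)` for some `s ∈ S`. -/
def circulantGraph (n : ℕ) (S : Set ℕ) : SimpleGraph (ZMod n) where
  Adj x y := x ≠ y ∧ ∃ s ∈ S, (x - y = (s : ZMod n) ∨ y - x = (s : ZMod n))
  symm := by
    constructor
    rintro x y ⟨hne, s, hs, h⟩
    exact ⟨hne.symm, s, hs, h.symm⟩
  loopless := by
    constructor
    rintro x ⟨hne, -⟩
    exact hne rfl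

/-- The multiplicative circulant graph `MC(m^h) = Cay(Z_{m^h}, {m^0, m^1, …, m^{h-1}})`. -/
def MCGraph (m h : ℕ) : SimpleGraph (ZMod (m ^ h)) :=
  circulantGraph (m ^ h) {s | ∃ i < h, s = m ^ i}


/-- NAF weight of an integer. -/
def nafW (y : ℤ) : ℕ :=
  if y = 0 then 0
  else if 2 ∣ y then nafW (y / 2)
  else if y % 4 = 1 then 1 + nafW ((y - 1) / 2)
  else 1 + nafW ((y + 1) / 2)
termination_by y.natAbs
decreasing_by all_goals omega

lemma nafW_zero : nafW 0 = 0 := by rw [nafW]; simp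

lemma nafW_even (y : ℤ) : nafW (2 * y) = nafW y := by
  rcases eq_or_ne y 0 with rfl | hy
  · norm_num
  · rw [nafW]
    simp only [mul_ne_zero two_ne_zero hy, if_false, dvd_mul_right, if_true,
      Int.mul_ediv_cancel_left _ two_ne_zero]

lemma nafW_odd1 (y : ℤ) (h : y % 4 = 1) : nafW y = 1 + nafW ((y - 1) / 2) := by
  rw [nafW]
  have h0 : y ≠ 0 := by omega
  have h2 : ¬ (2 ∣ y) := by omega
  simp [h0, h2, h]

lemma nafW_odd3 (y : ℤ) (h : y % 4 = 3) : nafW y = 1 + nafW ((y + 1) / 2) := by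
  rw [nafW]
  have h0 : y ≠ 0 := by omega
  have h2 : ¬ (2 ∣ y) := by omega
  have h4 : ¬ (y % 4 = 1) := by omega
  simp [h0, h2, h4]

theorem nafW_neg (y : ℤ) : nafW (-y) = nafW y := by
  rcases eq_or_ne y 0 with rfl | h0
  · norm_num
  rcases Int.even_or_odd y with ⟨z, hz⟩ | ⟨z, hz⟩
  · subst hz
    rw [show (-(z + z)) = 2 * (-z) by ring, show (z + z : ℤ) = 2 * z by ring,
      nafW_even, nafW_even, nafW_neg z]
  · rcases show y % 4 = 1 ∨ y % 4 = 3 by omega with h | h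
    · rw [nafW_odd1 y h, nafW_odd3 (-y) (by omega)]
      rw [show (-y + 1) / 2 = -((y - 1) / 2) by omega, nafW_neg]
  
    · rw [nafW_odd3 y h, nafW_odd1 (-y) (by omega)]
      rw [show (-y - 1) / 2 = -((y + 1) / 2) by omega, nafW_neg]
termination_by y.natAbs
decreasing_by all_goals omega

lemma nafW_even' (y : ℤ) (h : y % 2 = 0) : nafW y = nafW (y / 2) := by
  have := nafW_even (y / 2)
  rw [show 2 * (y / 2) = y by omega] at this
  exact this

theorem nafW_add_one (y : ℤ) : nafW (y + 1) ≤ nafW y + 1 := by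
  rcases show y % 4 = 0 ∨ y % 4 = 1 ∨ y % 4 = 2 ∨ y % 4 = 3 by omega with h | h | h | h
  · rw [nafW_even' y (by omega), nafW_odd1 (y + 1) (by omega),
      show (y + 1 - 1) / 2 = y / 2 by omega]
    omega
  · rw [nafW_odd1 y h, nafW_even' (y + 1) (by omega),
      show (y + 1) / 2 = (y - 1) / 2 + 1 by omega]
    have := nafW_add_one ((y - 1) / 2)
    omega
  · rw [nafW_even' y (by omega), nafW_odd3 (y + 1) (by omega),
      show (y + 1 + 1) / 2 = y / 2 + 1 by omega]
    rcases show y % 8 = 2 ∨ y % 8 = 6 by omega with h8 | h8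
    · rw [nafW_odd1 (y / 2) (by omega), nafW_even' (y / 2 + 1) (by omega),
        show (y / 2 + 1) / 2 = (y / 2 - 1) / 2 + 1 by omega]
      have := nafW_add_one ((y / 2 - 1) / 2)
      omega
    · rw [nafW_odd3 (y / 2) (by omega), nafW_even' (y / 2 + 1) (by omega),
        show (y / 2 + 1) / 2 = (y / 2 + 1) / 2 by rfl]
      omega
  · rw [nafW_odd3 y h, nafW_even' (y + 1) (by omega)]
    omega
termination_by y.natAbs
decreasing_by all_goals omega

theorem nafW_sub_one (y : ℤ) : nafW (y - 1) ≤ nafW y + 1 := by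
  have := nafW_add_one (-y)
  rw [show -y + 1 = -(y - 1) by ring, nafW_neg, nafW_neg] at this
  exact this

theorem nafW_add_two (y : ℤ) : nafW (y + 2) ≤ nafW y + 1 := by
  rcases show y % 4 = 0 ∨ y % 4 = 1 ∨ y % 4 = 2 ∨ y % 4 = 3 by omega with h | h | h | h
  · rw [nafW_even' y (by omega), nafW_even' (y + 2) (by omega),
      show (y + 2) / 2 = y / 2 + 1 by omega]
    exact nafW_add_one (y / 2)
  · rw [nafW_odd1 y h, nafW_odd3 (y + 2) (by omega),
      show (y + 2 + 1) / 2 = (y - 1) / 2 + 2 by omega]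
    have := nafW_add_two ((y - 1) / 2)
    omega
  · rw [nafW_even' y (by omega), nafW_even' (y + 2) (by omega),
      show (y + 2) / 2 = y / 2 + 1 by omega]
    exact nafW_add_one (y / 2)
  · rw [nafW_odd3 y h, nafW_odd1 (y + 2) (by omega),
      show (y + 2 - 1) / 2 = (y + 1) / 2 by omega]
    omega
termination_by y.natAbs
decreasing_by all_goals omega

theorem nafW_sub_two (y : ℤ) : nafW (y - 2) ≤ nafW y + 1 := by
  have := nafW_add_two (-y)
  rw [show -y + 2 = -(y - 2) by ring, nafW_neg, nafW_neg] at this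
  exact this

theorem nafW_add_pow (i : ℕ) (y : ℤ) :
    nafW (y + 2 ^ i) ≤ nafW y + 1 ∧ nafW (y - 2 ^ i) ≤ nafW y + 1 := by
  induction i generalizing y with
  | zero => simpa using ⟨nafW_add_one y, nafW_sub_one y⟩
  | succ i ih =>
    rcases Nat.eq_zero_or_pos i with rfl | hi
    · simpa using ⟨nafW_add_two y, nafW_sub_two y⟩
    have h4 : (4 : ℤ) ∣ 2 ^ (i + 1) := by
      have : (4 : ℤ) = 2 ^ 2 := by norm_num
      rw [this]
      exact pow_dvd_pow 2 (by omega)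
    rcases show y % 2 = 0 ∨ y % 4 = 1 ∨ y % 4 = 3 by omega with h | h | h
    · rw [nafW_even' y h, nafW_even' (y + 2 ^ (i+1)) (by omega),
        nafW_even' (y - 2 ^ (i+1)) (by omega),
        show (y + 2 ^ (i+1)) / 2 = y / 2 + 2 ^ i by
          rw [pow_succ]; omega,
        show (y - 2 ^ (i+1)) / 2 = y / 2 - 2 ^ i by
          rw [pow_succ]; omega]
      exact ih (y / 2)
    · rw [nafW_odd1 y h, nafW_odd1 (y + 2 ^ (i+1)) (by omega),
        nafW_odd1 (y - 2 ^ (i+1)) (by omega),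
        show (y + 2 ^ (i+1) - 1) / 2 = (y - 1) / 2 + 2 ^ i by rw [pow_succ]; omega,
        show (y - 2 ^ (i+1) - 1) / 2 = (y - 1) / 2 - 2 ^ i by rw [pow_succ]; omega]
      have := ih ((y - 1) / 2)
      omega
    · rw [nafW_odd3 y h, nafW_odd3 (y + 2 ^ (i+1)) (by omega),
        nafW_odd3 (y - 2 ^ (i+1)) (by omega),
        show (y + 2 ^ (i+1) + 1) / 2 = (y + 1) / 2 + 2 ^ i by rw [pow_succ]; omega,
        show (y - 2 ^ (i+1) + 1) / 2 = (y + 1) / 2 - 2 ^ i by rw [pow_succ]; omega]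
      have := ih ((y + 1) / 2)
      omega

lemma nafW_one : nafW 1 = 1 := by
  rw [nafW_odd1 1 (by norm_num)]
  norm_num [nafW_zero]

lemma not_three_dvd_two_pow (e : ℕ) : ¬ (3 : ℤ) ∣ 2 ^ e := by
  intro hd
  have hp : Prime (3 : ℤ) := by norm_num
  have := hp.dvd_of_dvd_pow hd
  norm_num at this

/-- Key structural lemma: adding `2 ^ h` to a `3|y| < 2^h` integer adds one NAF digit. -/
theorem nafW_pow_add (h : ℕ) (y : ℤ) (hy : 3 * y.natAbs < 2 ^ h) :
    nafW (2 ^ h + y) = nafW y + 1 := by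
  induction h generalizing y with
  | zero =>
    have : y = 0 := by omega
    subst this
    simpa [nafW_zero] using nafW_one
  | succ h ih =>
    have h4 : h = 0 ∨ (4 : ℤ) ∣ 2 ^ (h + 1) := by
      rcases Nat.eq_zero_or_pos h with rfl | hh
      · left; rfl
      · right
        have : (4 : ℤ) = 2 ^ 2 := by norm_num
        rw [this]; exact pow_dvd_pow 2 (by omega)
    have hpow : (2 : ℤ) ^ (h + 1) = 2 * 2 ^ h := by rw [pow_succ]; ring
    have c1 : ((2 ^ h : ℕ) : ℤ) = 2 ^ h := by push_cast; rfl
    have c2 : ((2 ^ (h + 1) : ℕ) : ℤ) = 2 ^ (h + 1) := by push_cast; rfl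
    have hppos : (0 : ℤ) < 2 ^ h := by positivity
    rcases show y % 2 = 0 ∨ y % 4 = 1 ∨ y % 4 = 3 by omega with hp | hp | hp
    · rw [nafW_even' y hp, nafW_even' (2 ^ (h+1) + y) (by omega),
        show (2 ^ (h+1) + y) / 2 = 2 ^ h + y / 2 by omega]
      exact ih (y / 2) (by omega)
    · -- y odd, so h+1 ≥ 2, i.e. h ≥ 1
      have hh : h ≥ 1 := by
        by_contra hc
        have : h = 0 := by omega
        subst this
        simp at hy
        omega
      have h4' : (4 : ℤ) ∣ 2 ^ (h + 1) := by
        rcases h4 with rfl | h4'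
        · omega
        · exact h4'
      have h3 : ¬ (3 : ℤ) ∣ 2 ^ (h + 1) := not_three_dvd_two_pow _
      have h2dvd : (2 : ℤ) ∣ 2 ^ h := dvd_pow_self 2 (by omega)
      obtain ⟨q, hq⟩ := h4'
      have h3q : ¬ (3 : ℤ) ∣ q := fun hd => h3 (hq ▸ Dvd.dvd.mul_left hd 4)
      rw [nafW_odd1 y hp, nafW_odd1 (2 ^ (h+1) + y) (by omega),
        show (2 ^ (h+1) + y - 1) / 2 = 2 ^ h + (y - 1) / 2 by omega]
      have hrec : 3 * ((y - 1) / 2).natAbs < 2 ^ h := by omega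
      rw [ih _ hrec]
      ring
    · have hh : h ≥ 1 := by
        by_contra hc
        have : h = 0 := by omega
        subst this
        simp at hy
        omega
      have h4' : (4 : ℤ) ∣ 2 ^ (h + 1) := by
        rcases h4 with rfl | h4'
        · omega
        · exact h4'
      have h3 : ¬ (3 : ℤ) ∣ 2 ^ (h + 1) := not_three_dvd_two_pow _
      have h2dvd : (2 : ℤ) ∣ 2 ^ h := dvd_pow_self 2 (by omega)
      obtain ⟨q, hq⟩ := h4'
      have h3q : ¬ (3 : ℤ) ∣ q := fun hd => h3 (hq ▸ Dvd.dvd.mul_left hd 4)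
      rw [nafW_odd3 y hp, nafW_odd3 (2 ^ (h+1) + y) (by omega),
        show (2 ^ (h+1) + y + 1) / 2 = 2 ^ h + (y + 1) / 2 by omega]
      have hrec : 3 * ((y + 1) / 2).natAbs < 2 ^ h := by omega
      rw [ih _ hrec]
      ring

/-- Splitting: any integer is congruent mod `2^h` to an integer of absolute
value less than `2^h` with no larger NAF weight. -/
theorem exists_small_rep (h : ℕ) (y : ℤ) :
    ∃ A : ℤ, (2 ^ h : ℤ) ∣ (y - A) ∧ A.natAbs < 2 ^ h ∧ nafW A ≤ nafW y := by
  induction h generalizing y with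
  | zero => exact ⟨0, by simpa using Int.one_dvd y, by norm_num, by simp [nafW_zero]⟩
  | succ h ih =>
    rcases show y % 2 = 0 ∨ y % 4 = 1 ∨ y % 4 = 3 by omega with hp | hp | hp
    · obtain ⟨A, hd, hb, hw⟩ := ih (y / 2)
      have hd2 : (2 ^ (h + 1) : ℤ) ∣ (y - 2 * A) := by
        have h2 := mul_dvd_mul_left (2 : ℤ) hd
        rw [show (2 : ℤ) * (y / 2 - A) = y - 2 * A by omega] at h2
        rwa [show (2 : ℤ) ^ (h + 1) = 2 * 2 ^ h by ring]
      refine ⟨2 * A, hd2, ?_, ?_⟩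
      · have : (2 * A).natAbs = 2 * A.natAbs := by omega
        rw [this, pow_succ]
        omega
      · rw [nafW_even, nafW_even' y hp]
        exact hw
    · obtain ⟨A, hd, hb, hw⟩ := ih ((y - 1) / 2)
      have hd2 : (2 ^ (h + 1) : ℤ) ∣ (y - (2 * A + 1)) := by
        have h2 := mul_dvd_mul_left (2 : ℤ) hd
        rw [show (2 : ℤ) * ((y - 1) / 2 - A) = y - (2 * A + 1) by omega] at h2
        rwa [show (2 : ℤ) ^ (h + 1) = 2 * 2 ^ h by ring]
      refine ⟨2 * A + 1, hd2, ?_, ?_⟩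
      · have : (2 * A + 1).natAbs ≤ 2 * A.natAbs + 1 := by omega
        rw [pow_succ]
        omega
      · calc nafW (2 * A + 1) ≤ nafW (2 * A) + 1 := nafW_add_one _
          _ = nafW A + 1 := by rw [nafW_even]
          _ ≤ nafW ((y - 1) / 2) + 1 := by omega
          _ = nafW y := by rw [nafW_odd1 y hp]; omega
    · obtain ⟨A, hd, hb, hw⟩ := ih ((y + 1) / 2)
      have hd2 : (2 ^ (h + 1) : ℤ) ∣ (y - (2 * A - 1)) := by
        have h2 := mul_dvd_mul_left (2 : ℤ) hd
        rw [show (2 : ℤ) * ((y + 1) / 2 - A) = y - (2 * A - 1) by omega] at h2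
        rwa [show (2 : ℤ) ^ (h + 1) = 2 * 2 ^ h by ring]
      refine ⟨2 * A - 1, hd2, ?_, ?_⟩
      · have : (2 * A - 1).natAbs ≤ 2 * A.natAbs + 1 := by omega
        rw [pow_succ]
        omega
      · calc nafW (2 * A - 1) ≤ nafW (2 * A) + 1 := nafW_sub_one _
          _ = nafW A + 1 := by rw [nafW_even]
          _ ≤ nafW ((y + 1) / 2) + 1 := by omega
          _ = nafW y := by rw [nafW_odd3 y hp]; omega

/-- Sum of a list of signed powers of two. -/
def repSum : List (ℕ × Bool) → ℤ
  | [] => 0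
  | (i, b) :: L => (if b then (2 : ℤ) ^ i else -(2 : ℤ) ^ i) + repSum L

lemma repSum_nil : repSum [] = 0 := rfl

lemma repSum_cons (i : ℕ) (b : Bool) (L : List (ℕ × Bool)) :
    repSum ((i, b) :: L) = (if b then (2 : ℤ) ^ i else -(2 : ℤ) ^ i) + repSum L := rfl

lemma nafW_le_repSum_length (L : List (ℕ × Bool)) : nafW (repSum L) ≤ L.length := by
  induction L with
  | nil => simp [repSum, nafW_zero]
  | cons p L ih =>
    obtain ⟨i, b⟩ := p
    rcases b with _ | _
    · calc nafW (repSum ((i, false) :: L)) = nafW (repSum L - 2 ^ i) := by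
            simp [repSum]; ring_nf
          _ ≤ nafW (repSum L) + 1 := (nafW_add_pow i _).2
          _ ≤ L.length + 1 := by omega
          _ = ((i, false) :: L).length := by simp
    · calc nafW (repSum ((i, true) :: L)) = nafW (repSum L + 2 ^ i) := by
            simp [repSum]; ring_nf
          _ ≤ nafW (repSum L) + 1 := (nafW_add_pow i _).1
          _ ≤ L.length + 1 := by omega
          _ = ((i, true) :: L).length := by simp

def shiftRep (L : List (ℕ × Bool)) : List (ℕ × Bool) := L.map (fun p => (p.1 + 1, p.2))

lemma repSum_shift (L : List (ℕ × Bool)) : repSum (shiftRep L) = 2 * repSum L := by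
  induction L with
  | nil => simp [repSum, shiftRep]
  | cons p L ih =>
    obtain ⟨i, b⟩ := p
    simp only [shiftRep, List.map_cons, repSum] at *
    rw [ih, pow_succ]
    rcases b with _ | _ <;> simp <;> ring

lemma not_three_dvd_two_pow_nat (e : ℕ) : ¬ (3 : ℕ) ∣ 2 ^ e := by
  intro hd
  have := Nat.Prime.dvd_of_dvd_pow Nat.prime_three hd
  norm_num at this

lemma halfBound1 (y : ℤ) (Q : ℕ) (hy : 3 * y.natAbs ≤ 2 * Q) (h3 : ¬ 3 ∣ Q)
    (h2 : 2 ∣ Q) (hp : y % 4 = 1) : 3 * ((y - 1) / 2).natAbs ≤ Q := by omega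

lemma halfBound3 (y : ℤ) (Q : ℕ) (hy : 3 * y.natAbs ≤ 2 * Q) (h3 : ¬ 3 ∣ Q)
    (h2 : 2 ∣ Q) (hp : y % 4 = 3) : 3 * ((y + 1) / 2).natAbs ≤ Q := by omega

/-- Existence of a minimal-weight representation with bounded exponents. -/
theorem exists_rep (h : ℕ) (y : ℤ) (hy : 3 * y.natAbs ≤ 2 ^ (h + 1)) :
    ∃ L : List (ℕ × Bool), repSum L = y ∧ L.length = nafW y ∧ ∀ p ∈ L, p.1 < h := by
  induction h generalizing y with
  | zero =>
    have : y = 0 := by omega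
    subst this
    exact ⟨[], by simp [repSum], by simp [nafW_zero], by simp⟩
  | succ h ih =>
    rcases eq_or_ne y 0 with rfl | h0
    · exact ⟨[], by simp [repSum], by simp [nafW_zero], by simp⟩
    have hy2 : 3 * y.natAbs ≤ 2 ^ (h + 2) := by
      rw [show h + 2 = h + 1 + 1 from rfl]; exact hy
    clear hy
    have e1 : (2 : ℕ) ^ (h + 2) = 2 * 2 ^ (h + 1) := by ring
    have h3n : ¬ (3 ∣ (2 : ℕ) ^ (h + 2)) := by
      intro hd
      have := Nat.Prime.dvd_of_dvd_pow Nat.prime_three hd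
      norm_num at this
    have h4n : (4 : ℕ) ∣ 2 ^ (h + 2) := by
      have h44 : (4 : ℕ) = 2 ^ 2 := rfl
      rw [h44]; exact pow_dvd_pow 2 (by omega)
    obtain ⟨q, hq⟩ := h4n
    have h3q : ¬ (3 ∣ q) := fun hd => h3n (hq ▸ Dvd.dvd.mul_left hd 4)
    rcases show y % 2 = 0 ∨ y % 4 = 1 ∨ y % 4 = 3 by omega with hp | hp | hp
    · obtain ⟨L, hs, hl, he⟩ := ih (y / 2) (by omega)
      refine ⟨shiftRep L, ?_, ?_, ?_⟩
      · rw [repSum_shift, hs]; omega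
      · rw [shiftRep, List.length_map, hl, nafW_even' y hp]
      · intro p hp'
        simp only [shiftRep, List.mem_map] at hp'
        obtain ⟨p', hp'', rfl⟩ := hp'
        have := he p' hp''
        omega
    · obtain ⟨L, hs, hl, he⟩ := ih ((y - 1) / 2) (halfBound1 y _ (e1 ▸ hy2)
        (not_three_dvd_two_pow_nat _) (dvd_pow_self 2 (Nat.succ_ne_zero h)) hp)
      refine ⟨(0, true) :: shiftRep L, ?_, ?_, ?_⟩
      · simp only [repSum, if_pos, repSum_shift, hs, pow_zero]
        omega
      · simp only [List.length_cons, shiftRep, List.length_map, hl, nafW_odd1 y hp]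
        omega
      · intro p hp'
        rcases List.mem_cons.mp hp' with rfl | hp''
        · simp
        · simp only [shiftRep, List.mem_map] at hp''
          obtain ⟨p', hm, rfl⟩ := hp''
          have := he p' hm
          omega
    · obtain ⟨L, hs, hl, he⟩ := ih ((y + 1) / 2) (halfBound3 y _ (e1 ▸ hy2)
        (not_three_dvd_two_pow_nat _) (dvd_pow_self 2 (Nat.succ_ne_zero h)) hp)
      refine ⟨(0, false) :: shiftRep L, ?_, ?_, ?_⟩
      · simp only [repSum, repSum_shift, hs, pow_zero, Bool.false_eq_true, if_false]
        omega
      · simp only [List.length_cons, shiftRep, List.length_map, hl, nafW_odd3 y hp]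
        omega
      · intro p hp'
        rcases List.mem_cons.mp hp' with rfl | hp''
        · simp
        · simp only [shiftRep, List.mem_map] at hp''
          obtain ⟨p', hm, rfl⟩ := hp''
          have := he p' hm
          omega

lemma MC_adj {h : ℕ} {u v : ZMod (2 ^ h)} :
    (MCGraph 2 h).Adj u v ↔ u ≠ v ∧ ∃ i < h,
      (u - v = ((2 ^ i : ℕ) : ZMod (2 ^ h)) ∨ v - u = ((2 ^ i : ℕ) : ZMod (2 ^ h))) := by
  constructor
  · rintro ⟨hne, s, ⟨i, hi, rfl⟩, hd⟩
    exact ⟨hne, i, hi, hd⟩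
  · rintro ⟨hne, i, hi, hd⟩
    exact ⟨hne, 2 ^ i, ⟨i, hi, rfl⟩, hd⟩

lemma two_pow_ne_zero_zmod {h i : ℕ} (hi : i < h) :
    ((2 ^ i : ℕ) : ZMod (2 ^ h)) ≠ 0 := by
  intro hc
  rw [ZMod.natCast_eq_zero_iff] at hc
  have h1 := Nat.le_of_dvd (by positivity) hc
  have h2 := pow_lt_pow_right₀ (a := (2 : ℕ)) (by norm_num) hi
  omega

/-- Every walk from `u` to `v` yields an integer congruent to `v - u` of small weight. -/
lemma walk_weight {h : ℕ} {u v : ZMod (2 ^ h)} (p : (MCGraph 2 h).Walk u v) :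
    ∃ y : ℤ, (y : ZMod (2 ^ h)) = v - u ∧ nafW y ≤ p.length := by
  induction p with
  | nil => exact ⟨0, by simp, by simp [nafW_zero]⟩
  | @cons a b c hadj p ih =>
    obtain ⟨y, hy, hw⟩ := ih
    rcases (MC_adj.mp hadj).2 with ⟨i, hi, hd | hd⟩
    · -- a - b = 2 ^ i, so b - a = -(2 ^ i)
      refine ⟨y - 2 ^ i, ?_, ?_⟩
      · push_cast at hd ⊢
        rw [hy, ← hd]
        ring
      · have := (nafW_add_pow i y).2
        simp only [SimpleGraph.Walk.length_cons]
        omega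
    · refine ⟨y + 2 ^ i, ?_, ?_⟩
      · push_cast at hd ⊢
        rw [hy, ← hd]
        ring
      · have := (nafW_add_pow i y).1
        simp only [SimpleGraph.Walk.length_cons]
        omega

/-- A representation with exponents `< h` gives a walk from `0`. -/
lemma exists_walk_of_rep {h : ℕ} (L : List (ℕ × Bool)) (hL : ∀ p ∈ L, p.1 < h) :
    ∃ w : (MCGraph 2 h).Walk 0 ((repSum L : ℤ) : ZMod (2 ^ h)), w.length = L.length := by
  induction L with
  | nil =>
    have e : ((repSum [] : ℤ) : ZMod (2 ^ h)) = 0 := by rw [repSum_nil]; simp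
    exact ⟨SimpleGraph.Walk.nil.copy rfl e.symm, by simp⟩
  | cons p L ih =>
    obtain ⟨i, b⟩ := p
    obtain ⟨w, hw⟩ := ih (fun q hq => hL q (List.mem_cons_of_mem _ hq))
    have hi : i < h := hL (i, b) List.mem_cons_self
    have hne2 := two_pow_ne_zero_zmod (h := h) hi
    rcases b with _ | _
    · have hrs : repSum ((i, false) :: L) = repSum L - 2 ^ i := by
        rw [repSum_cons]; simp only [Bool.false_eq_true, if_false, if_true]; ring
      have hdiff : ((repSum L : ℤ) : ZMod (2 ^ h)) - ((repSum ((i, false) :: L) : ℤ) : ZMod (2 ^ h))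
          = ((2 ^ i : ℕ) : ZMod (2 ^ h)) := by
        rw [hrs]; push_cast; ring
      have hadj : (MCGraph 2 h).Adj ((repSum L : ℤ) : ZMod (2 ^ h))
          ((repSum ((i, false) :: L) : ℤ) : ZMod (2 ^ h)) := by
        rw [MC_adj]
        refine ⟨?_, i, hi, Or.inl hdiff⟩
        intro hc
        rw [hc, sub_self] at hdiff
        exact hne2 hdiff.symm
      exact ⟨w.concat hadj, by simp [hw]⟩
    · have hrs : repSum ((i, true) :: L) = repSum L + 2 ^ i := by
        rw [repSum_cons]; simp only [Bool.false_eq_true, if_false, if_true]; ring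
      have hdiff : ((repSum ((i, true) :: L) : ℤ) : ZMod (2 ^ h)) - ((repSum L : ℤ) : ZMod (2 ^ h))
          = ((2 ^ i : ℕ) : ZMod (2 ^ h)) := by
        rw [hrs]; push_cast; ring
      have hadj : (MCGraph 2 h).Adj ((repSum L : ℤ) : ZMod (2 ^ h))
          ((repSum ((i, true) :: L) : ℤ) : ZMod (2 ^ h)) := by
        rw [MC_adj]
        refine ⟨?_, i, hi, Or.inr hdiff⟩
        intro hc
        rw [hc, sub_self] at hdiff
        exact hne2 hdiff.symm
      exact ⟨w.concat hadj, by simp [hw]⟩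

theorem MC_dist_formula (h j : ℕ) (hj : j ≤ 2 ^ h) :
    (MCGraph 2 h).dist 0 (j : ZMod (2 ^ h)) = min (nafW j) (nafW ((2 : ℤ) ^ h - j)) := by
  have c1 : ((2 ^ h : ℕ) : ℤ) = (2 : ℤ) ^ h := by push_cast; rfl
  have c2 : (2 : ℕ) ^ (h + 1) = 2 * 2 ^ h := by ring
  have hjz : (((j : ℤ)) : ZMod (2 ^ h)) = (j : ZMod (2 ^ h)) := by push_cast; rfl
  have hzero : ((2 ^ h : ℕ) : ZMod (2 ^ h)) = 0 := ZMod.natCast_self _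
  have castsub : (((j : ℤ) - 2 ^ h : ℤ) : ZMod (2 ^ h)) = (j : ZMod (2 ^ h)) := by
    have h2 : ((2 : ZMod (2 ^ h))) ^ h = 0 := by
      have := ZMod.natCast_self (2 ^ h)
      push_cast at this
      exact this
    push_cast
    rw [h2]
    ring
  -- upper bound helpers
  have up1 : 3 * j ≤ 2 ^ (h + 1) →
      (MCGraph 2 h).dist 0 (j : ZMod (2 ^ h)) ≤ nafW j := by
    intro hyp
    obtain ⟨L, hs, hl, he⟩ := exists_rep h j (by rw [Int.natAbs_natCast]; exact hyp)
    obtain ⟨w, hw⟩ := exists_walk_of_rep L he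
    have hcast : ((repSum L : ℤ) : ZMod (2 ^ h)) = (j : ZMod (2 ^ h)) := by rw [hs, hjz]
    have hd := SimpleGraph.dist_le w
    have heq : (MCGraph 2 h).dist 0 ((repSum L : ℤ) : ZMod (2 ^ h)) =
        (MCGraph 2 h).dist 0 (j : ZMod (2 ^ h)) := by rw [hcast]
    omega
  have up2 : 3 * (2 ^ h - j) ≤ 2 ^ (h + 1) →
      (MCGraph 2 h).dist 0 (j : ZMod (2 ^ h)) ≤ nafW ((2 : ℤ) ^ h - j) := by
    intro hyp
    have hna : ((j : ℤ) - 2 ^ h).natAbs = 2 ^ h - j := by omega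
    obtain ⟨L, hs, hl, he⟩ := exists_rep h ((j : ℤ) - 2 ^ h) (by omega)
    obtain ⟨w, hw⟩ := exists_walk_of_rep L he
    have hcast : ((repSum L : ℤ) : ZMod (2 ^ h)) = (j : ZMod (2 ^ h)) := by rw [hs, castsub]
    have hnw : nafW ((j : ℤ) - 2 ^ h) = nafW ((2 : ℤ) ^ h - j) := by
      rw [show ((j : ℤ) - 2 ^ h) = -((2 : ℤ) ^ h - j) by ring, nafW_neg]
    have hd := SimpleGraph.dist_le w
    have heq : (MCGraph 2 h).dist 0 ((repSum L : ℤ) : ZMod (2 ^ h)) =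
        (MCGraph 2 h).dist 0 (j : ZMod (2 ^ h)) := by rw [hcast]
    omega
  -- a walk always exists
  have hwalk : ∃ w : (MCGraph 2 h).Walk 0 (j : ZMod (2 ^ h)), True := by
    rcases le_or_gt (3 * j) (2 ^ (h + 1)) with hc | hc
    · obtain ⟨L, hs, hl, he⟩ := exists_rep h j (by rw [Int.natAbs_natCast]; exact hc)
      obtain ⟨w, _⟩ := exists_walk_of_rep L he
      exact ⟨w.copy rfl (by rw [hs, hjz]), trivial⟩
    · obtain ⟨L, hs, hl, he⟩ := exists_rep h ((j : ℤ) - 2 ^ h)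
        (by have : ((j : ℤ) - 2 ^ h).natAbs = 2 ^ h - j := by omega
            omega)
      obtain ⟨w, _⟩ := exists_walk_of_rep L he
      exact ⟨w.copy rfl (by rw [hs, castsub]), trivial⟩
  obtain ⟨w0, -⟩ := hwalk
  have hreach : (MCGraph 2 h).Reachable 0 (j : ZMod (2 ^ h)) := ⟨w0⟩
  -- lower bound
  have hlow : min (nafW j) (nafW ((2 : ℤ) ^ h - j)) ≤
      (MCGraph 2 h).dist 0 (j : ZMod (2 ^ h)) := by
    obtain ⟨p, hp⟩ := hreach.exists_walk_length_eq_dist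
    obtain ⟨y, hy, hwt⟩ := walk_weight p
    obtain ⟨A, hd, hAb, hAw⟩ := exists_small_rep h y
    have hdj : ((2 ^ h : ℕ) : ℤ) ∣ (y - j) := by
      rw [← ZMod.intCast_zmod_eq_zero_iff_dvd]
      push_cast
      rw [hy]
      push_cast
      ring
    rw [c1] at hdj
    have hdA : (2 ^ h : ℤ) ∣ ((j : ℤ) - A) := by
      have := dvd_sub hd hdj
      rw [show y - A - (y - (j : ℤ)) = (j : ℤ) - A by ring] at this
      exact this
    obtain ⟨k, hk⟩ := hdA
    have hP : (0 : ℤ) < 2 ^ h := by positivity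
    have hk01 : k = 0 ∨ k = 1 := by
      by_contra hc
      push_neg at hc
      rcases lt_or_ge k 0 with hneg | hpos
      · have hle : (2 : ℤ) ^ h * k ≤ 2 ^ h * (-1) :=
          mul_le_mul_of_nonneg_left (by omega) hP.le
        rw [mul_neg_one] at hle
        omega
      · have h2 : 2 ≤ k := by omega
        have hle : (2 : ℤ) ^ h * 2 ≤ 2 ^ h * k :=
          mul_le_mul_of_nonneg_left h2 hP.le
        omega
    rcases hk01 with rfl | rfl
    · rw [mul_zero] at hk
      have hAj : A = (j : ℤ) := by omega
      subst hAj
      have : min (nafW (j : ℤ)) (nafW ((2 : ℤ) ^ h - j)) ≤ nafW (j : ℤ) := min_le_left _ _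
      omega
    · rw [mul_one] at hk
      have hAj : A = (j : ℤ) - 2 ^ h := by omega
      subst hAj
      have hnw : nafW ((j : ℤ) - 2 ^ h) = nafW ((2 : ℤ) ^ h - j) := by
        rw [show ((j : ℤ) - 2 ^ h) = -((2 : ℤ) ^ h - j) by ring, nafW_neg]
      have : min (nafW (j : ℤ)) (nafW ((2 : ℤ) ^ h - j)) ≤ nafW ((2 : ℤ) ^ h - j) :=
        min_le_right _ _
      omega
  -- combine
  rcases lt_trichotomy (3 * j) (2 ^ h) with hc | hc | hc
  · have hC1 : nafW ((2 : ℤ) ^ h - j) = nafW j + 1 := by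
      have := nafW_pow_add h (-(j : ℤ)) (by rw [Int.natAbs_neg, Int.natAbs_natCast]; exact hc)
      rw [show (2 : ℤ) ^ h + -(j : ℤ) = (2 : ℤ) ^ h - j by ring, nafW_neg] at this
      exact this
    have hmin : min (nafW j) (nafW ((2 : ℤ) ^ h - j)) = nafW (j : ℤ) := by omega
    have := up1 (by omega)
    omega
  · exfalso
    exact not_three_dvd_two_pow_nat h ⟨j, hc.symm⟩
  · have hcond2 : 3 * (2 ^ h - j) ≤ 2 ^ (h + 1) := by omega
    rcases le_or_gt (3 * j) (2 ^ (h + 1)) with hc2 | hc2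
    · have := up1 hc2
      have := up2 hcond2
      omega
    · have hC1 : nafW (j : ℤ) = nafW ((2 : ℤ) ^ h - j) + 1 := by
        have hna : ((j : ℤ) - 2 ^ h).natAbs = 2 ^ h - j := by omega
        have := nafW_pow_add h ((j : ℤ) - 2 ^ h) (by omega)
        rw [show (2 : ℤ) ^ h + ((j : ℤ) - 2 ^ h) = (j : ℤ) by ring] at this
        have hnw : nafW ((j : ℤ) - 2 ^ h) = nafW ((2 : ℤ) ^ h - j) := by
          rw [show ((j : ℤ) - 2 ^ h) = -((2 : ℤ) ^ h - j) by ring, nafW_neg]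
        omega
      have := up2 hcond2
      omega

lemma nafW_sub_from_pow (e : ℕ) (j : ℕ) (h3 : 3 * j < 2 ^ e) :
    nafW ((2 : ℤ) ^ e - j) = nafW j + 1 := by
  have := nafW_pow_add e (-(j : ℤ)) (by rw [Int.natAbs_neg, Int.natAbs_natCast]; exact h3)
  rw [show (2 : ℤ) ^ e + -(j : ℤ) = (2 : ℤ) ^ e - j by ring, nafW_neg] at this
  exact this

lemma nafW_add_from_pow (e : ℕ) (j : ℕ) (h3 : 3 * j < 2 ^ e) :
    nafW ((2 : ℤ) ^ e + j) = nafW j + 1 :=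
  nafW_pow_add e (j : ℤ) (by rw [Int.natAbs_natCast]; exact h3)

/-- Step lemma, small case. -/
lemma dist_step_eq (m j : ℕ) (hm : 1 ≤ m) (h3 : 3 * j < 2 ^ (m + 1)) (hj : j ≤ 2 ^ m) :
    (MCGraph 2 (m + 1)).dist 0 (j : ZMod (2 ^ (m + 1))) =
      (MCGraph 2 m).dist 0 (j : ZMod (2 ^ m)) := by
  rw [MC_dist_formula (m + 1) j (hj.trans (Nat.pow_le_pow_right (by norm_num) (by omega))),
    MC_dist_formula m j hj]
  have htop : nafW ((2 : ℤ) ^ (m + 1) - j) = nafW j + 1 := nafW_sub_from_pow _ _ h3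
  rcases lt_trichotomy (3 * j) (2 ^ m) with hc | hc | hc
  · have hmid : nafW ((2 : ℤ) ^ m - j) = nafW j + 1 := nafW_sub_from_pow _ _ hc
    omega
  · exact absurd ⟨j, hc.symm⟩ (not_three_dvd_two_pow_nat m)
  · -- band case : 2^m < 3j < 2^(m+1)
    obtain ⟨t, rfl⟩ : ∃ t, m = t + 1 := ⟨m - 1, by omega⟩
    set r : ℤ := (j : ℤ) - 2 ^ t with hr
    have ct : ((2 ^ t : ℕ) : ℤ) = (2 : ℤ) ^ t := by push_cast; rfl
    have e1 : (2 : ℕ) ^ (t + 1) = 2 * 2 ^ t := by ring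
    have e2 : (2 : ℕ) ^ (t + 2) = 4 * 2 ^ t := by ring
    have hrb : 3 * r.natAbs < 2 ^ t := by
      have h3' : 3 * j < 2 ^ (t + 2) := by
        have : (2:ℕ) ^ (t + 1 + 1) = 2 ^ (t + 2) := by ring
        omega
      omega
    have hWj : nafW (j : ℤ) = nafW r + 1 := by
      have := nafW_pow_add t r hrb
      rw [show (2 : ℤ) ^ t + r = (j : ℤ) by rw [hr]; ring] at this
      exact this
    have hWm : nafW ((2 : ℤ) ^ (t + 1) - j) = nafW r + 1 := by
      have := nafW_pow_add t (-r) (by rw [Int.natAbs_neg]; exact hrb)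
      rw [show (2 : ℤ) ^ t + -r = (2 : ℤ) ^ (t + 1) - j by rw [hr]; ring, nafW_neg] at this
      exact this
    omega

/-- Step lemma, large case. -/
lemma dist_step_succ (m j : ℕ) (h3 : 2 ^ (m + 1) < 3 * j) (hj : j ≤ 2 ^ m) :
    (MCGraph 2 (m + 1)).dist 0 (j : ZMod (2 ^ (m + 1))) =
      (MCGraph 2 m).dist 0 (j : ZMod (2 ^ m)) + 1 := by
  rw [MC_dist_formula (m + 1) j (hj.trans (Nat.pow_le_pow_right (by norm_num) (by omega))),
    MC_dist_formula m j hj]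
  set k : ℕ := 2 ^ m - j with hk
  have e1 : (2 : ℕ) ^ (m + 1) = 2 * 2 ^ m := by ring
  have cm : ((2 ^ m : ℕ) : ℤ) = (2 : ℤ) ^ m := by push_cast; rfl
  have hkb : 3 * k < 2 ^ m := by omega
  have hkz : (k : ℤ) = (2 : ℤ) ^ m - j := by
    rw [hk]
    push_cast [Nat.cast_sub hj]
    ring
  have hWj : nafW (j : ℤ) = nafW k + 1 := by
    have := nafW_pow_add m (-(k : ℤ)) (by rw [Int.natAbs_neg, Int.natAbs_natCast]; exact hkb)
    rw [show (2 : ℤ) ^ m + -(k : ℤ) = (j : ℤ) by rw [hkz]; ring, nafW_neg] at this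
    exact this
  have hWtop : nafW ((2 : ℤ) ^ (m + 1) - j) = nafW k + 1 := by
    have := nafW_pow_add m ((k : ℤ)) (by rw [Int.natAbs_natCast]; exact hkb)
    rw [show (2 : ℤ) ^ m + (k : ℤ) = (2 : ℤ) ^ (m + 1) - j by rw [hkz]; ring] at this
    exact this
  have hWm : nafW ((2 : ℤ) ^ m - j) = nafW k := by rw [← hkz]
  omega

/-- Recursion for distances from `0` in `MC(2^h)` in terms of `MC(2^(h-1))`. -/
theorem MC_two_dist_recursion (h : ℕ) (hh : 2 ≤ h) :
    (∀ n : ℕ, h = 2 * n →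
      ((∀ j : ℕ, j ≤ (4 ^ n - 1) / 3 →
          (MCGraph 2 h).dist 0 (j : ZMod (2 ^ h)) =
            (MCGraph 2 (h - 1)).dist 0 (j : ZMod (2 ^ (h - 1)))) ∧
       (∀ j : ℕ, (4 ^ n - 1) / 3 < j → j ≤ 2 ^ (h - 1) →
          (MCGraph 2 h).dist 0 (j : ZMod (2 ^ h)) =
            (MCGraph 2 (h - 1)).dist 0 (j : ZMod (2 ^ (h - 1))) + 1))) ∧
    (∀ n : ℕ, h = 2 * n + 1 →
      ((∀ j : ℕ, j ≤ (2 * (4 ^ n - 1)) / 3 →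
          (MCGraph 2 h).dist 0 (j : ZMod (2 ^ h)) =
            (MCGraph 2 (h - 1)).dist 0 (j : ZMod (2 ^ (h - 1)))) ∧
       (∀ j : ℕ, (2 * (4 ^ n - 1)) / 3 < j → j ≤ 2 ^ (h - 1) →
          (MCGraph 2 h).dist 0 (j : ZMod (2 ^ h)) =
            (MCGraph 2 (h - 1)).dist 0 (j : ZMod (2 ^ (h - 1))) + 1))) := by
  obtain ⟨m, rfl⟩ : ∃ m, h = m + 1 := ⟨h - 1, by omega⟩
  have hm : 1 ≤ m := by omega
  simp only [Nat.add_sub_cancel]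
  have e1 : (2 : ℕ) ^ (m + 1) = 2 * 2 ^ m := by ring
  have hmp : (1 : ℕ) ≤ 2 ^ m := Nat.one_le_two_pow
  constructor
  · intro n hn
    have h4 : (4 : ℕ) ^ n = 2 ^ (m + 1) := by
      rw [show (4 : ℕ) = 2 ^ 2 by norm_num, ← pow_mul]
      congr 1
      omega
    have hmod : (4 : ℕ) ^ n % 3 = 1 := by rw [Nat.pow_mod]; norm_num
    have h4div : 3 ∣ 4 ^ n - 1 := by
      have h1 : 1 ≤ (4:ℕ) ^ n := Nat.one_le_pow _ _ (by norm_num)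
      omega
    constructor
    · intro j hj
      have h3 : 3 * j ≤ 4 ^ n - 1 := by
        have := (Nat.le_div_iff_mul_le (by norm_num : 0 < 3)).mp hj
        omega
      have h1 : 1 ≤ (4:ℕ) ^ n := Nat.one_le_pow _ _ (by norm_num)
      exact dist_step_eq m j hm (by omega) (by omega)
    · intro j hj hj2
      have h3 : 4 ^ n - 1 < 3 * j := by
        have := (Nat.div_lt_iff_lt_mul (by norm_num : 0 < 3)).mp hj
        omega
      have hne : 3 * j ≠ 2 ^ (m + 1) := fun hc => not_three_dvd_two_pow_nat (m+1) ⟨j, hc.symm⟩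
      have h1 : 1 ≤ (4:ℕ) ^ n := Nat.one_le_pow _ _ (by norm_num)
      exact dist_step_succ m j (by omega) hj2
  · intro n hn
    have h4 : (4 : ℕ) ^ n = 2 ^ m := by
      rw [show (4 : ℕ) = 2 ^ 2 by norm_num, ← pow_mul]
      congr 1
      omega
    have hmod : (4 : ℕ) ^ n % 3 = 1 := by rw [Nat.pow_mod]; norm_num
    have h4div : 3 ∣ 4 ^ n - 1 := by
      have h1 : 1 ≤ (4:ℕ) ^ n := Nat.one_le_pow _ _ (by norm_num)
      omega
    have h1 : 1 ≤ (4:ℕ) ^ n := Nat.one_le_pow _ _ (by norm_num)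
    constructor
    · intro j hj
      have h3 : 3 * j ≤ 2 * (4 ^ n - 1) := by
        have := (Nat.le_div_iff_mul_le (by norm_num : 0 < 3)).mp hj
        omega
      exact dist_step_eq m j hm (by omega) (by omega)
    · intro j hj hj2
      have h3 : 2 * (4 ^ n - 1) < 3 * j := by
        have := (Nat.div_lt_iff_lt_mul (by norm_num : 0 < 3)).mp hj
        omega
      have hne : 3 * j ≠ 2 ^ (m + 1) := fun hc => not_three_dvd_two_pow_nat (m+1) ⟨j, hc.symm⟩
      exact dist_step_succ m j (by omega) hj2
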